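/- Let K be a pyramid with parallelogram base, split into tetrahedra T₁ and T₂ by the diagonal through v₁ and v₃. Define S(K) as the space of functions v ∈ H¹(K) (equivalently, continuous on K) whose restriction to each T_ℓ is a polynomial of total degree ≤ 2, whose restriction to each of the four triangular faces of K is affine, and whose restriction to the parallelogram base is bilinear (degree ≤1 in each of the two base coordinates). Then dim S(K) = 5, and the point-evaluation functionals at the five vertices v₁,…,v₅ form a basis of the dual space S(K)'; in particular a function in S(K) vanishing at all five vertices is identically zero. -/

import Mathlib

open Matrix

/-- First sub-tetrahedron of the pyramid. -/
noncomputable def pyrT1 (v : Fin 5 → Fin 3 → ℝ) : Set (Fin 3 → ℝ) :=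
  convexHull ℝ {v 2, v 0, v 1, v 4}

/-- Second sub-tetrahedron of the pyramid. -/
noncomputable def pyrT2 (v : Fin 5 → Fin 3 → ℝ) : Set (Fin 3 → ℝ) :=
  convexHull ℝ {v 0, v 2, v 3, v 4}

/-- The pyramid `K = T₁ ∪ T₂`. -/
noncomputable def pyrK (v : Fin 5 → Fin 3 → ℝ) : Set (Fin 3 → ℝ) :=
  pyrT1 v ∪ pyrT2 v

/-- Membership in the composite space `S(K)`: continuous on `K`, piecewise of
total degree ≤ 2, affine on each triangular face, bilinear on the base. -/
noncomputable def memSK (v : Fin 5 → Fin 3 → ℝ) (f : (Fin 3 → ℝ) → ℝ) : Prop :=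
  ContinuousOn f (pyrK v) ∧
  (∃ p : MvPolynomial (Fin 3) ℝ, p.totalDegree ≤ 2 ∧
    ∀ x ∈ pyrT1 v, f x = MvPolynomial.eval x p) ∧
  (∃ p : MvPolynomial (Fin 3) ℝ, p.totalDegree ≤ 2 ∧
    ∀ x ∈ pyrT2 v, f x = MvPolynomial.eval x p) ∧
  (∀ F ∈ ({{v 0, v 1, v 4}, {v 1, v 2, v 4}, {v 2, v 3, v 4}, {v 0, v 3, v 4}} :
      Set (Set (Fin 3 → ℝ))),
    ∃ (a : ℝ) (b : Fin 3 → ℝ), ∀ x ∈ convexHull ℝ F, f x = a + b ⬝ᵥ x) ∧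
  (∃ c00 c10 c01 c11 : ℝ, ∀ s t : ℝ, s ∈ Set.Icc (0:ℝ) 1 → t ∈ Set.Icc (0:ℝ) 1 →
    f (v 0 + s • (v 1 - v 0) + t • (v 3 - v 0)) =
      c00 + c10 * s + c01 * t + c11 * (s * t))

/-!
On each tetrahedron `T₁`, `T₂` a function of `S(K)` that vanishes at the vertices is a quadratic
polynomial vanishing on the three faces through one vertex (`v₁`, resp. `v₃`): two lateral faces,
on which it is affine, and half of the base, on which it is bilinear. A function that is quadratic
along every line and vanishes on a triangle vanishes on its whole plane, and if it vanishes on three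
planes in general position it vanishes identically: a generic line meets the three planes in three
distinct points. This gives unisolvence.

`S(K)` is invariant under affine changes of coordinates, so the nodal basis can be written down on
the reference pyramid with vertices `0, e₀, e₀ + e₁, e₁, e₂`. In its coordinates `(s, t, u)` all
nodal functions are affine except for the one cross term `st + u min(s, t)`.
-/

open MvPolynomial

namespace MvPolynomial

variable {σ τ R : Type*} [CommSemiring R]

theorem totalDegree_bind₁_le {ℓ : σ → MvPolynomial τ R} (hℓ : ∀ i, (ℓ i).totalDegree ≤ 1)
    (p : MvPolynomial σ R) : (bind₁ ℓ p).totalDegree ≤ p.totalDegree := by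
  conv_lhs => rw [p.as_sum, map_sum]
  refine (totalDegree_finsetSum _ _).trans (Finset.sup_le fun m hm => ?_)
  rw [bind₁_monomial]
  refine (totalDegree_mul _ _).trans ?_
  rw [totalDegree_C, zero_add]
  refine (totalDegree_finsetProd _ _).trans
    ((Finset.sum_le_sum fun i _ => ?_).trans (le_totalDegree hm))
  exact (totalDegree_pow _ _).trans (by simpa using Nat.mul_le_mul_left (m i) (hℓ i))

theorem natDegree_aeval_le {S : Type*} [CommSemiring S] [Algebra R S] {ℓ : σ → Polynomial S}
    (hℓ : ∀ i, (ℓ i).natDegree ≤ 1) (p : MvPolynomial σ R) :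
    (aeval ℓ p).natDegree ≤ p.totalDegree := by
  conv_lhs => rw [p.as_sum, map_sum]
  refine Polynomial.natDegree_sum_le_of_forall_le _ _ fun m hm => ?_
  rw [aeval_monomial, Polynomial.algebraMap_apply]
  refine Polynomial.natDegree_C_mul_le _ _ |>.trans <| Polynomial.natDegree_prod_le _ _ |>.trans
    ((Finset.sum_le_sum fun i _ => ?_).trans (le_totalDegree hm))
  exact Polynomial.natDegree_pow_le.trans (by simpa using Nat.mul_le_mul_left (m i) (hℓ i))

variable {ι K : Type*} [Fintype ι] [CommRing K]

theorem exists_totalDegree_le_one_eval_eq [Nontrivial K] (a : K) (b : ι → K) :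
    ∃ q : MvPolynomial ι K, q.totalDegree ≤ 1 ∧ ∀ x, eval x q = a + b ⬝ᵥ x := by
  refine ⟨C a + ∑ i, C (b i) * X i, ?_, fun x => by simp [dotProduct]⟩
  refine (totalDegree_add _ _).trans (max_le (by simp) ?_)
  refine (totalDegree_finsetSum _ _).trans (Finset.sup_le fun i _ => ?_)
  exact (totalDegree_mul _ _).trans (by simp [totalDegree_X])

theorem exists_totalDegree_le_eval_eq_eval_comp [Nontrivial K] [DecidableEq ι]
    (A : (ι → K) →ᵃ[K] (σ → K)) (p : MvPolynomial σ K) :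
    ∃ q : MvPolynomial ι K, q.totalDegree ≤ p.totalDegree ∧ ∀ x, eval x q = eval (A x) p := by
  have hcoord (i : σ) : ∃ ℓ : MvPolynomial ι K, ℓ.totalDegree ≤ 1 ∧ ∀ x, eval x ℓ = A x i := by
    obtain ⟨ℓ, hℓ, heval⟩ := exists_totalDegree_le_one_eval_eq (A 0 i)
      (fun j => A.linear (fun k => if j = k then 1 else 0) i)
    refine ⟨ℓ, hℓ, fun x => ?_⟩
    rw [heval, congrFun A.decomp x, Pi.add_apply, LinearMap.pi_apply_eq_sum_univ A.linear x]
    simp [dotProduct, mul_comm, add_comm]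
  choose ℓ hℓ heval using hcoord
  refine ⟨bind₁ ℓ p, totalDegree_bind₁_le hℓ p, fun x => ?_⟩
  change eval₂Hom (RingHom.id K) x (bind₁ ℓ p) = _
  rw [eval₂Hom_bind₁, show (fun i => eval₂Hom (RingHom.id K) x (ℓ i)) = A x from
    _root_.funext fun i => heval i x]
  rfl

theorem eval_aeval_add_smul (p : MvPolynomial σ K) (x d : σ → K) (r : K) :
    (aeval (fun i => Polynomial.C (d i) * Polynomial.X + Polynomial.C (x i)) p).eval r =
      eval (x + r • d) p := by
  rw [← Polynomial.coe_aeval_eq_eval, comp_aeval_apply, ← coe_aeval_eq_eval]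
  refine congrArg (fun f => aeval f p) (_root_.funext fun i => ?_)
  simp only [map_add, map_mul, Polynomial.aeval_C, Polynomial.aeval_X, Pi.add_apply,
    Pi.smul_apply, smul_eq_mul, Algebra.algebraMap_self, RingHom.id_apply]
  ring

end MvPolynomial

open Polynomial in
def IsQuadraticOnLines {E : Type*} [AddCommGroup E] [Module ℝ E] (G : E → ℝ) : Prop :=
  ∀ x d : E, ∃ P : ℝ[X], P.natDegree ≤ 2 ∧ ∀ r : ℝ, G (x + r • d) = P.eval r

theorem isQuadraticOnLines_eval {σ : Type*} {p : MvPolynomial σ ℝ} (hp : p.totalDegree ≤ 2) :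
    IsQuadraticOnLines (fun x => eval x p) := fun x d =>
  ⟨_, (natDegree_aeval_le (fun _ => Polynomial.natDegree_linear_le) p).trans hp,
    fun r => (eval_aeval_add_smul p x d r).symm⟩

namespace IsQuadraticOnLines

variable {E F : Type*} [AddCommGroup E] [Module ℝ E] [AddCommGroup F] [Module ℝ F] {G : E → ℝ}

theorem comp_affineMap (hG : IsQuadraticOnLines G) (A : F →ᵃ[ℝ] E) :
    IsQuadraticOnLines (G ∘ A) := by
  intro x d
  obtain ⟨P, hP, hPeval⟩ := hG (A x) (A.linear d)
  refine ⟨P, hP, fun r => ?_⟩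
  rw [Function.comp_apply, ← hPeval, add_comm x, ← vadd_eq_add, A.map_vadd, vadd_eq_add,
    map_smul, add_comm]

theorem eq_zero_of_three_roots (hG : IsQuadraticOnLines G) {x d : E} {r₁ r₂ r₃ : ℝ}
    (h₁₂ : r₁ ≠ r₂) (h₁₃ : r₁ ≠ r₃) (h₂₃ : r₂ ≠ r₃) (h₁ : G (x + r₁ • d) = 0)
    (h₂ : G (x + r₂ • d) = 0) (h₃ : G (x + r₃ • d) = 0) (r : ℝ) : G (x + r • d) = 0 := by
  obtain ⟨P, hP, hPeval⟩ := hG x d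
  have hroots : ∀ s ∈ ({r₁, r₂, r₃} : Finset ℝ), P.eval s = 0 := by
    simp only [Finset.mem_insert, Finset.mem_singleton, forall_eq_or_imp, forall_eq, ← hPeval]
    exact ⟨h₁, h₂, h₃⟩
  rw [hPeval, P.eq_zero_of_natDegree_lt_card_of_eval_eq_zero' _ hroots
    (by rw [Finset.card_eq_three.2 ⟨r₁, r₂, r₃, h₁₂, h₁₃, h₂₃, rfl⟩]; omega), Polynomial.eval_zero]

theorem eq_zero_of_eq_zero_off_finite (hG : IsQuadraticOnLines G) {x d : E} {s : Set ℝ}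
    (hs : s.Finite) (h : ∀ r ∉ s, G (x + r • d) = 0) (r : ℝ) : G (x + r • d) = 0 := by
  obtain ⟨P, -, hPeval⟩ := hG x d
  have hP : P = 0 := P.eq_zero_of_infinite_isRoot <| hs.infinite_compl.mono fun r hr => by
    simpa [← hPeval] using h r hr
  rw [hPeval, hP, Polynomial.eval_zero]

theorem eq_zero_on_plane_of_triangle (hG : IsQuadraticOnLines G) {o d₁ d₂ : E}
    (h : ∀ s u : ℝ, 0 ≤ s → 0 ≤ u → s + u ≤ 1 → G (o + s • d₁ + u • d₂) = 0) (s u : ℝ) :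
    G (o + s • d₁ + u • d₂) = 0 := by
  have hrow (u : ℝ) (hu₀ : 0 ≤ u) (hu₁ : u ≤ 1 / 2) (s : ℝ) : G (o + s • d₁ + u • d₂) = 0 := by
    rw [add_right_comm]
    refine hG.eq_zero_of_three_roots (r₁ := 0) (r₂ := 1 / 4) (r₃ := 1 / 2) (by norm_num)
      (by norm_num) (by norm_num) ?_ ?_ ?_ s <;>
      rw [add_right_comm] <;> exact h _ _ (by norm_num) hu₀ (by linarith)
  exact hG.eq_zero_of_three_roots (x := o + s • d₁) (r₁ := 0) (r₂ := 1 / 4) (r₃ := 1 / 2)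
    (by norm_num) (by norm_num) (by norm_num) (hrow _ le_rfl (by norm_num) s)
    (hrow _ (by norm_num) (by norm_num) s) (hrow _ (by norm_num) le_rfl s) u

theorem eq_zero_of_coordinatePlanes {G : (Fin 3 → ℝ) → ℝ} (hG : IsQuadraticOnLines G)
    (h₀ : ∀ y, y 0 = 0 → G y = 0) (h₁ : ∀ y, y 1 = 0 → G y = 0) (h₂ : ∀ y, y 2 = 0 → G y = 0)
    (y : Fin 3 → ℝ) : G y = 0 := by
  -- The diagonal line through `y` meets the plane `y i = 0` at the parameter `-y i`.
  have generic (y : Fin 3 → ℝ) (h01 : y 0 ≠ y 1) (h02 : y 0 ≠ y 2) (h12 : y 1 ≠ y 2) :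
      G y = 0 := by
    simpa using hG.eq_zero_of_three_roots (x := y) (d := fun _ => 1) (r₁ := -y 0) (r₂ := -y 1)
      (r₃ := -y 2) (by simpa using h01) (by simpa using h02) (by simpa using h12)
      (h₀ _ (by simp)) (h₁ _ (by simp)) (h₂ _ (by simp)) 0
  have off_diagonal (y : Fin 3 → ℝ) (h12 : y 1 ≠ y 2) : G y = 0 := by
    have hline (r : ℝ) (hr : r ∉ ({y 1 - y 0, y 2 - y 0} : Set ℝ)) :
        G (y + r • Pi.single 0 1) = 0 := by
      simp only [Set.mem_insert_iff, Set.mem_singleton_iff, not_or] at hr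
      apply generic <;> simp only [Pi.add_apply, Pi.smul_apply, Pi.single_apply, smul_eq_mul] <;>
        grind
    simpa using hG.eq_zero_of_eq_zero_off_finite (Set.toFinite _) hline 0
  have hline (r : ℝ) (hr : r ∉ ({y 2 - y 1} : Set ℝ)) : G (y + r • Pi.single 1 1) = 0 := by
    rw [Set.mem_singleton_iff] at hr
    apply off_diagonal
    simp only [Pi.add_apply, Pi.smul_apply, Pi.single_apply, smul_eq_mul]
    grind
  simpa using hG.eq_zero_of_eq_zero_off_finite (Set.toFinite _) hline 0

end IsQuadraticOnLines

section Tetrahedron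

variable {E : Type*} [AddCommGroup E] [Module ℝ E]

theorem linearIndependent_sub_of_affineIndependent {a b c d : E}
    (h : AffineIndependent ℝ ![a, b, c, d]) : LinearIndependent ℝ ![b - a, c - a, d - a] := by
  rw [Fintype.linearIndependent_iff]
  intro g hg
  have hw := h.eq_zero_of_sum_eq_zero (s := Finset.univ)
    (w := ![-(g 0 + g 1 + g 2), g 0, g 1, g 2])
    (by simp [Fin.sum_univ_four, Matrix.cons_val]; ring) (by
      simp [Fin.sum_univ_four, Fin.sum_univ_three, Matrix.cons_val] at hg ⊢
      rw [← hg]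
      module)
  intro i
  fin_cases i
  exacts [hw 1 (by simp), hw 2 (by simp), hw 3 (by simp)]

theorem exists_affineEquiv_eq_add_sum (hE : Module.finrank ℝ E = 3) (a : E) {w : Fin 3 → E}
    (hw : LinearIndependent ℝ w) :
    ∃ Φ : (Fin 3 → ℝ) ≃ᵃ[ℝ] E, ∀ y, Φ y = a + ∑ i, y i • w i := by
  let B := basisOfLinearIndependentOfCardEqFinrank hw (by simp [hE])
  refine ⟨B.equivFun.symm.toAffineEquiv.trans (AffineEquiv.constVAdd ℝ E a), fun y => ?_⟩
  simp [B, coe_basisOfLinearIndependentOfCardEqFinrank]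

theorem IsQuadraticOnLines.eq_zero_of_faces (hE : Module.finrank ℝ E = 3)
    {G : E → ℝ} (hG : IsQuadraticOnLines G) {a b c d : E}
    (hind : AffineIndependent ℝ ![a, b, c, d])
    (habc : ∀ s u : ℝ, 0 ≤ s → 0 ≤ u → s + u ≤ 1 → G (a + s • (b - a) + u • (c - a)) = 0)
    (habd : ∀ s u : ℝ, 0 ≤ s → 0 ≤ u → s + u ≤ 1 → G (a + s • (b - a) + u • (d - a)) = 0)
    (hacd : ∀ s u : ℝ, 0 ≤ s → 0 ≤ u → s + u ≤ 1 → G (a + s • (c - a) + u • (d - a)) = 0)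
    (x : E) : G x = 0 := by
  obtain ⟨Φ, hΦ⟩ :=
    exists_affineEquiv_eq_add_sum hE a (linearIndependent_sub_of_affineIndependent hind)
  obtain ⟨y, rfl⟩ := Φ.surjective x
  refine (hG.comp_affineMap Φ.toAffineMap).eq_zero_of_coordinatePlanes ?_ ?_ ?_ y <;>
    intro y hy <;> simp only [Function.comp_apply, AffineEquiv.coe_toAffineMap, hΦ,
      Fin.sum_univ_three, hy, zero_smul, Matrix.cons_val_zero, Matrix.cons_val_one,
      Matrix.cons_val_two]
  · simpa [add_assoc] using hG.eq_zero_on_plane_of_triangle hacd (y 1) (y 2)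
  · simpa [add_assoc] using hG.eq_zero_on_plane_of_triangle habd (y 0) (y 2)
  · simpa [add_assoc] using hG.eq_zero_on_plane_of_triangle habc (y 0) (y 1)

theorem add_smul_sub_add_smul_sub_mem_convexHull {a b c : E} {s u : ℝ} (hs : 0 ≤ s)
    (hu : 0 ≤ u) (hsu : s + u ≤ 1) : a + s • (b - a) + u • (c - a) ∈ convexHull ℝ {a, b, c} := by
  have := (convex_convexHull ℝ {a, b, c}).sum_mem (t := Finset.univ) (w := ![1 - s - u, s, u])
    (z := ![a, b, c]) (fun i _ => by fin_cases i <;> simp <;> linarith)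
    (by simp [Fin.sum_univ_three]; ring)
    (fun i _ => subset_convexHull ℝ _ (by fin_cases i <;> simp))
  convert this using 1
  simp [Fin.sum_univ_three]
  module

end Tetrahedron

section DotProduct

variable {ι : Type*} [Fintype ι] {s : Set (ι → ℝ)} {b : ι → ℝ} {c : ℝ} {x : ι → ℝ}

theorem dotProduct_eq_of_mem_convexHull (h : ∀ y ∈ s, b ⬝ᵥ y = c) (hx : x ∈ convexHull ℝ s) :
    b ⬝ᵥ x = c :=
  convexHull_min h (convex_hyperplane ⟨dotProduct_add b, fun r y => dotProduct_smul r b y⟩ c) hx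

theorem dotProduct_le_of_mem_convexHull (h : ∀ y ∈ s, b ⬝ᵥ y ≤ c) (hx : x ∈ convexHull ℝ s) :
    b ⬝ᵥ x ≤ c :=
  convexHull_min h (convex_halfSpace_le ⟨dotProduct_add b, fun r y => dotProduct_smul r b y⟩ c) hx

theorem eq_zero_of_eq_add_dotProduct_of_mem_convexHull {f : (ι → ℝ) → ℝ} {a : ℝ}
    (hf : ∀ x ∈ convexHull ℝ s, f x = a + b ⬝ᵥ x) (h0 : ∀ y ∈ s, f y = 0)
    (hx : x ∈ convexHull ℝ s) : f x = 0 := by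
  have hvert (y : ι → ℝ) (hy : y ∈ s) : b ⬝ᵥ y = -a := by
    linarith [hf y (subset_convexHull ℝ s hy), h0 y hy]
  rw [hf x hx, dotProduct_eq_of_mem_convexHull hvert hx, add_neg_cancel]

theorem exists_add_dotProduct_comp {κ : Type*} [Fintype κ] [DecidableEq ι]
    (A : (ι → ℝ) →ᵃ[ℝ] (κ → ℝ)) (a : ℝ) (b : κ → ℝ) :
    ∃ (a' : ℝ) (b' : ι → ℝ), ∀ x, a + b ⬝ᵥ A x = a' + b' ⬝ᵥ x :=
  ⟨a + b ⬝ᵥ A 0, b ᵥ* LinearMap.toMatrix' A.linear, fun x => by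
    rw [congrFun A.decomp x, Pi.add_apply, ← LinearMap.toMatrix'_mulVec, dotProduct_add,
      dotProduct_mulVec]
    ring⟩

end DotProduct

theorem eq_zero_of_eq_eval_of_faces {T : Set (Fin 3 → ℝ)} (hT : Convex ℝ T)
    {p : MvPolynomial (Fin 3) ℝ} (hp : p.totalDegree ≤ 2) {f : (Fin 3 → ℝ) → ℝ}
    (hfp : ∀ x ∈ T, f x = eval x p) {a b c d : Fin 3 → ℝ} (hsub : {a, b, c, d} ⊆ T)
    (hind : AffineIndependent ℝ ![a, b, c, d])
    (habc : ∀ s u : ℝ, 0 ≤ s → 0 ≤ u → s + u ≤ 1 → f (a + s • (b - a) + u • (c - a)) = 0)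
    (habd : ∀ s u : ℝ, 0 ≤ s → 0 ≤ u → s + u ≤ 1 → f (a + s • (b - a) + u • (d - a)) = 0)
    (hacd : ∀ s u : ℝ, 0 ≤ s → 0 ≤ u → s + u ≤ 1 → f (a + s • (c - a) + u • (d - a)) = 0) :
    ∀ x ∈ T, f x = 0 := by
  have hT' {y z : Fin 3 → ℝ} (hy : y ∈ T) (hz : z ∈ T) {s u : ℝ} (hs : 0 ≤ s) (hu : 0 ≤ u)
      (hsu : s + u ≤ 1) : a + s • (y - a) + u • (z - a) ∈ T :=
    convexHull_min (Set.insert_subset (hsub (by simp)) (Set.insert_subset hy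
      (Set.singleton_subset_iff.2 hz))) hT (add_smul_sub_add_smul_sub_mem_convexHull hs hu hsu)
  have hb : b ∈ T := hsub (by simp)
  have hc : c ∈ T := hsub (by simp)
  have hd : d ∈ T := hsub (by simp)
  have hG := (isQuadraticOnLines_eval hp).eq_zero_of_faces (by simp) hind
    (fun s u hs hu hsu => (hfp _ (hT' hb hc hs hu hsu)).symm.trans (habc s u hs hu hsu))
    (fun s u hs hu hsu => (hfp _ (hT' hb hd hs hu hsu)).symm.trans (habd s u hs hu hsu))
    (fun s u hs hu hsu => (hfp _ (hT' hc hd hs hu hsu)).symm.trans (hacd s u hs hu hsu))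
  exact fun x hx => (hfp x hx).trans (hG x)

theorem existsUnique_eq_sum_mul {X ι R : Type*} [Fintype ι] [DecidableEq ι] [CommRing R]
    {S : Submodule R (X → R)} {K : Set X} {p : ι → X} (hp : ∀ j, p j ∈ K) {φ : ι → X → R}
    (hφ : ∀ i, φ i ∈ S) (hδ : ∀ i j, φ i (p j) = if i = j then 1 else 0)
    (huni : ∀ f ∈ S, (∀ j, f (p j) = 0) → ∀ x ∈ K, f x = 0) {f : X → R} (hf : f ∈ S) :
    ∃! c : ι → R, ∀ x ∈ K, f x = ∑ i, c i * φ i x := by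
  have hsum (c : ι → R) (j : ι) : ∑ i, c i * φ i (p j) = c j := by simp [hδ]
  refine ⟨fun i => f (p i), fun x hx => ?_, fun c hc => funext fun j => ?_⟩
  · have hrem : f - ∑ i, f (p i) • φ i ∈ S :=
      S.sub_mem hf (S.sum_mem fun i _ => S.smul_mem _ (hφ i))
    have := huni _ hrem (fun j => by simp [Finset.sum_apply, hsum]) x hx
    simpa [Finset.sum_apply, sub_eq_zero] using this
  · rw [hc (p j) (hp j), hsum]

section PyramidSpace

variable {v : Fin 5 → Fin 3 → ℝ} {f g : (Fin 3 → ℝ) → ℝ}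

theorem memSK_of_eq_add_dotProduct (a : ℝ) (b : Fin 3 → ℝ) (hf : ∀ x, f x = a + b ⬝ᵥ x) :
    memSK v f := by
  obtain ⟨q, hq, hqf⟩ := exists_totalDegree_le_one_eval_eq a b
  have hpoly : ∀ S : Set (Fin 3 → ℝ), ∃ p : MvPolynomial (Fin 3) ℝ, p.totalDegree ≤ 2 ∧
      ∀ x ∈ S, f x = eval x p := fun S => ⟨q, hq.trans one_le_two, fun x _ => by rw [hf, hqf]⟩
  refine ⟨?_, hpoly _, hpoly _, fun F _ => ⟨a, b, fun x _ => hf x⟩,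
    a + b ⬝ᵥ v 0, b ⬝ᵥ (v 1 - v 0), b ⬝ᵥ (v 3 - v 0), 0, fun s t _ _ => ?_⟩
  · rw [show f = fun x => a + b ⬝ᵥ x from funext hf]
    fun_prop
  · simp only [hf, dotProduct_add, dotProduct_smul, smul_eq_mul]
    ring

theorem memSK_add (hf : memSK v f) (hg : memSK v g) : memSK v (f + g) := by
  obtain ⟨hfc, ⟨p₁, hp₁, hf₁⟩, ⟨p₂, hp₂, hf₂⟩, hfF, c₀₀, c₁₀, c₀₁, c₁₁, hfB⟩ := hf
  obtain ⟨hgc, ⟨q₁, hq₁, hg₁⟩, ⟨q₂, hq₂, hg₂⟩, hgF, d₀₀, d₁₀, d₀₁, d₁₁, hgB⟩ := hg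
  refine ⟨hfc.add hgc,
    ⟨p₁ + q₁, (totalDegree_add _ _).trans (max_le hp₁ hq₁),
      fun x hx => by simp [hf₁ x hx, hg₁ x hx]⟩,
    ⟨p₂ + q₂, (totalDegree_add _ _).trans (max_le hp₂ hq₂),
      fun x hx => by simp [hf₂ x hx, hg₂ x hx]⟩,
    fun F hF => ?_, c₀₀ + d₀₀, c₁₀ + d₁₀, c₀₁ + d₀₁, c₁₁ + d₁₁,
    fun s t hs ht => by simp only [Pi.add_apply, hfB s t hs ht, hgB s t hs ht]; ring⟩
  obtain ⟨a, b, hab⟩ := hfF F hF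
  obtain ⟨a', b', hab'⟩ := hgF F hF
  exact ⟨a + a', b + b', fun x hx => by
    simp only [Pi.add_apply, hab x hx, hab' x hx, add_dotProduct]; ring⟩

theorem memSK_smul (c : ℝ) (hf : memSK v f) : memSK v (c • f) := by
  obtain ⟨hfc, ⟨p₁, hp₁, hf₁⟩, ⟨p₂, hp₂, hf₂⟩, hfF, c₀₀, c₁₀, c₀₁, c₁₁, hfB⟩ := hf
  refine ⟨hfc.const_smul c,
    ⟨C c * p₁, (totalDegree_mul _ _).trans (by simpa using hp₁),
      fun x hx => by simp [hf₁ x hx]⟩,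
    ⟨C c * p₂, (totalDegree_mul _ _).trans (by simpa using hp₂),
      fun x hx => by simp [hf₂ x hx]⟩,
    fun F hF => ?_, c * c₀₀, c * c₁₀, c * c₀₁, c * c₁₁,
    fun s t hs ht => by simp only [Pi.smul_apply, smul_eq_mul, hfB s t hs ht]; ring⟩
  obtain ⟨a, b, hab⟩ := hfF F hF
  exact ⟨c * a, c • b, fun x hx => by
    simp only [Pi.smul_apply, smul_eq_mul, hab x hx, smul_dotProduct]; ring⟩

variable (v) in
def pyramidSpace : Submodule ℝ ((Fin 3 → ℝ) → ℝ) where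
  carrier := {f | memSK v f}
  add_mem' := memSK_add
  zero_mem' := memSK_of_eq_add_dotProduct 0 0 fun x => by simp
  smul_mem' c _ := memSK_smul c

end PyramidSpace

section Unisolvence

variable {v : Fin 5 → Fin 3 → ℝ} {f : (Fin 3 → ℝ) → ℝ}

theorem memSK_eq_zero_on_base (hpar : v 0 - v 1 + v 2 - v 3 = 0) (hf : memSK v f)
    (h0 : ∀ j, f (v j) = 0) (s t : ℝ) (hs : s ∈ Set.Icc (0 : ℝ) 1) (ht : t ∈ Set.Icc (0 : ℝ) 1) :
    f (v 0 + s • (v 1 - v 0) + t • (v 3 - v 0)) = 0 := by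
  obtain ⟨c₀₀, c₁₀, c₀₁, c₁₁, hbil⟩ := hf.2.2.2.2
  have e₀₀ := hbil 0 0 (by simp) (by simp)
  have e₁₀ := hbil 1 0 (by simp) (by simp)
  have e₀₁ := hbil 0 1 (by simp) (by simp)
  have e₁₁ := hbil 1 1 (by simp) (by simp)
  rw [show v 0 + (1 : ℝ) • (v 1 - v 0) + (1 : ℝ) • (v 3 - v 0) = v 2 by
    linear_combination (norm := module) -hpar] at e₁₁
  simp only [zero_smul, one_smul, add_zero, add_sub_cancel, h0, mul_zero, mul_one]
    at e₀₀ e₁₀ e₀₁ e₁₁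
  obtain ⟨rfl, rfl, rfl, rfl⟩ : c₀₀ = 0 ∧ c₁₀ = 0 ∧ c₀₁ = 0 ∧ c₁₁ = 0 := by
    refine ⟨?_, ?_, ?_, ?_⟩ <;> linarith
  rw [hbil s t hs ht]
  ring

theorem memSK_eq_zero_on_faces (hf : memSK v f) (h0 : ∀ j, f (v j) = 0) :
    ∀ F ∈ ({{v 0, v 1, v 4}, {v 1, v 2, v 4}, {v 2, v 3, v 4}, {v 0, v 3, v 4}} :
      Set (Set (Fin 3 → ℝ))), ∀ x ∈ convexHull ℝ F, f x = 0 := by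
  intro F hF x hx
  obtain ⟨a, b, hab⟩ := hf.2.2.2.1 F hF
  refine eq_zero_of_eq_add_dotProduct_of_mem_convexHull hab (fun y hy => ?_) hx
  simp only [Set.mem_insert_iff, Set.mem_singleton_iff] at hF
  rcases hF with rfl | rfl | rfl | rfl <;>
    simp only [Set.mem_insert_iff, Set.mem_singleton_iff] at hy <;>
    rcases hy with rfl | rfl | rfl <;> exact h0 _

theorem memSK_eq_zero_of_eq_zero_at_vertices (hpar : v 0 - v 1 + v 2 - v 3 = 0)
    (hnd1 : AffineIndependent ℝ ![v 2, v 0, v 1, v 4])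
    (hnd2 : AffineIndependent ℝ ![v 0, v 2, v 3, v 4]) (hf : memSK v f)
    (h0 : ∀ j, f (v j) = 0) : ∀ x ∈ pyrK v, f x = 0 := by
  have hbase := memSK_eq_zero_on_base hpar hf h0
  have hface := memSK_eq_zero_on_faces hf h0
  obtain ⟨-, ⟨p₁, hp₁, hf₁⟩, ⟨p₂, hp₂, hf₂⟩, -⟩ := hf
  have hswap {a b c d : Fin 3 → ℝ} (h : AffineIndependent ℝ ![a, b, c, d]) :
      AffineIndependent ℝ ![c, b, a, d] := by
    convert (affineIndependent_equiv (Equiv.swap (0 : Fin 4) 2)).2 h using 1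
    ext i : 1
    fin_cases i <;> rfl
  intro x hx
  rcases hx with hx | hx
  · refine eq_zero_of_eq_eval_of_faces (convex_convexHull ℝ _) hp₁ hf₁ (a := v 1) (b := v 0)
      (c := v 2) (d := v 4) (subset_trans (by simp [Set.insert_subset_iff]) (subset_convexHull ℝ _))
      (hswap hnd1) (fun s u hs hu hsu => ?_) (fun s u hs hu hsu => ?_)
      (fun s u hs hu hsu => ?_) x hx
    · rw [show v 1 + s • (v 0 - v 1) + u • (v 2 - v 1)
          = v 0 + (1 - s) • (v 1 - v 0) + u • (v 3 - v 0) by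
        linear_combination (norm := module) u • hpar]
      exact hbase _ _ ⟨by linarith, by linarith⟩ ⟨hu, by linarith⟩
    · refine hface {v 0, v 1, v 4} (by simp) _ ?_
      rw [Set.insert_comm]
      exact add_smul_sub_add_smul_sub_mem_convexHull hs hu hsu
    · exact hface _ (by simp) _ (add_smul_sub_add_smul_sub_mem_convexHull hs hu hsu)
  · refine eq_zero_of_eq_eval_of_faces (convex_convexHull ℝ _) hp₂ hf₂ (a := v 3) (b := v 2)
      (c := v 0) (d := v 4) (subset_trans (by simp [Set.insert_subset_iff]) (subset_convexHull ℝ _))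
      (hswap hnd2) (fun s u hs hu hsu => ?_) (fun s u hs hu hsu => ?_)
      (fun s u hs hu hsu => ?_) x hx
    · rw [show v 3 + s • (v 2 - v 3) + u • (v 0 - v 3)
          = v 0 + s • (v 1 - v 0) + (1 - u) • (v 3 - v 0) by
        linear_combination (norm := module) s • hpar]
      exact hbase _ _ ⟨hs, by linarith⟩ ⟨by linarith, by linarith⟩
    · refine hface {v 2, v 3, v 4} (by simp) _ ?_
      rw [Set.insert_comm]
      exact add_smul_sub_add_smul_sub_mem_convexHull hs hu hsu
    · refine hface {v 0, v 3, v 4} (by simp) _ ?_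
      rw [Set.insert_comm]
      exact add_smul_sub_add_smul_sub_mem_convexHull hs hu hsu

end Unisolvence

theorem memSK_comp_affineEquiv_symm {w : Fin 5 → Fin 3 → ℝ} {g : (Fin 3 → ℝ) → ℝ}
    (E : (Fin 3 → ℝ) ≃ᵃ[ℝ] (Fin 3 → ℝ)) (hg : memSK w g) : memSK (E ∘ w) (g ∘ E.symm) := by
  obtain ⟨hgc, ⟨p₁, hp₁, hg₁⟩, ⟨p₂, hp₂, hg₂⟩, hgF, c₀₀, c₁₀, c₀₁, c₁₁, hgB⟩ := hg
  have hhull (S : Set (Fin 3 → ℝ)) : convexHull ℝ (E '' S) = E '' convexHull ℝ S :=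
    (E.toAffineMap.image_convexHull S).symm
  have hsymm {S : Set (Fin 3 → ℝ)} {x : Fin 3 → ℝ} (hx : x ∈ E '' S) : E.symm x ∈ S := by
    obtain ⟨y, hy, rfl⟩ := hx
    simpa using hy
  have hT₁ : pyrT1 (E ∘ w) = E '' pyrT1 w := by simp [pyrT1, ← hhull, Set.image_insert_eq]
  have hT₂ : pyrT2 (E ∘ w) = E '' pyrT2 w := by simp [pyrT2, ← hhull, Set.image_insert_eq]
  have hpoly {p : MvPolynomial (Fin 3) ℝ} (hp : p.totalDegree ≤ 2) {S : Set (Fin 3 → ℝ)}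
      (hgS : ∀ x ∈ S, g x = eval x p) :
      ∃ q : MvPolynomial (Fin 3) ℝ, q.totalDegree ≤ 2 ∧ ∀ x ∈ E '' S, g (E.symm x) = eval x q := by
    obtain ⟨q, hq, hqp⟩ := exists_totalDegree_le_eval_eq_eval_comp E.symm.toAffineMap p
    exact ⟨q, hq.trans hp, fun x hx => by rw [hqp, hgS _ (hsymm hx)]; rfl⟩
  have hface (F : Set (Fin 3 → ℝ))
      (hF : F ∈ ({{w 0, w 1, w 4}, {w 1, w 2, w 4}, {w 2, w 3, w 4}, {w 0, w 3, w 4}} :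
        Set (Set (Fin 3 → ℝ)))) :
      ∃ (a : ℝ) (b : Fin 3 → ℝ), ∀ x ∈ convexHull ℝ (E '' F), g (E.symm x) = a + b ⬝ᵥ x := by
    obtain ⟨a, b, hab⟩ := hgF F hF
    obtain ⟨a', b', hab'⟩ := exists_add_dotProduct_comp E.symm.toAffineMap a b
    exact ⟨a', b', fun x hx => by rw [hab _ (hsymm (hhull F ▸ hx)), ← hab']; rfl⟩
  refine ⟨?_, hT₁ ▸ hpoly hp₁ hg₁, hT₂ ▸ hpoly hp₂ hg₂, fun F hF => ?_,
    c₀₀, c₁₀, c₀₁, c₁₁, fun s t hs ht => ?_⟩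
  · rw [pyrK, hT₁, hT₂, ← Set.image_union]
    exact hgc.comp E.symm.continuous_of_finiteDimensional.continuousOn fun x hx => hsymm hx
  · simp only [Set.mem_insert_iff, Set.mem_singleton_iff] at hF
    rcases hF with rfl | rfl | rfl | rfl
    · simpa [Set.image_insert_eq] using hface {w 0, w 1, w 4} (by simp)
    · simpa [Set.image_insert_eq] using hface {w 1, w 2, w 4} (by simp)
    · simpa [Set.image_insert_eq] using hface {w 2, w 3, w 4} (by simp)
    · simpa [Set.image_insert_eq] using hface {w 0, w 3, w 4} (by simp)
  · have hE (x : Fin 3 → ℝ) : E x = E.linear x + E 0 := congrFun E.toAffineMap.decomp x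
    have : E (w 0) + s • (E (w 1) - E (w 0)) + t • (E (w 3) - E (w 0))
        = E (w 0 + s • (w 1 - w 0) + t • (w 3 - w 0)) := by
      rw [hE (w 0 + s • (w 1 - w 0) + t • (w 3 - w 0)), hE (w 0), hE (w 1), hE (w 3)]
      simp only [map_add, map_sub, map_smul]
      module
    simp only [Function.comp_apply, this, AffineEquiv.symm_apply_apply]
    exact hgB s t hs ht

def refPyramid : Fin 5 → Fin 3 → ℝ :=
  ![![0, 0, 0], ![1, 0, 0], ![1, 1, 0], ![0, 1, 0], ![0, 0, 1]]

/-- The nodal function of `v₂` on the reference pyramid: it glues `x 1 * (x 0 + x 2)` on `T₁` to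
`x 0 * (x 1 + x 2)` on `T₂` along the diagonal plane `x 0 = x 1`, and is `x 0 * x 1` on the base. -/
def refCrossTerm (x : Fin 3 → ℝ) : ℝ :=
  x 0 * x 1 + x 2 * min (x 0) (x 1)

def refBasis : Fin 5 → (Fin 3 → ℝ) → ℝ :=
  ![fun x => 1 - x 0 - x 1 - x 2 + refCrossTerm x, fun x => x 0 - refCrossTerm x, refCrossTerm,
    fun x => x 1 - refCrossTerm x, fun x => x 2]

theorem refBasis_apply_refPyramid (i j : Fin 5) :
    refBasis i (refPyramid j) = if i = j then 1 else 0 := by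
  fin_cases i <;> fin_cases j <;> simp [refBasis, refPyramid, refCrossTerm]

theorem refCrossTerm_of_mem_pyrT1 {x : Fin 3 → ℝ} (hx : x ∈ pyrT1 refPyramid) :
    refCrossTerm x = x 1 * (x 0 + x 2) := by
  have h : x 1 ≤ x 0 := by
    simpa [dotProduct, Fin.sum_univ_three] using
      dotProduct_le_of_mem_convexHull (b := ![-1, 1, 0]) (c := 0) (by simp [refPyramid]) hx
  rw [refCrossTerm, min_eq_right h]
  ring

theorem refCrossTerm_of_mem_pyrT2 {x : Fin 3 → ℝ} (hx : x ∈ pyrT2 refPyramid) :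
    refCrossTerm x = x 0 * (x 1 + x 2) := by
  have h : x 0 ≤ x 1 := by
    simpa [dotProduct, Fin.sum_univ_three] using
      dotProduct_le_of_mem_convexHull (b := ![1, -1, 0]) (c := 0) (by simp [refPyramid]) hx
  rw [refCrossTerm, min_eq_left h]
  ring

theorem memSK_refCrossTerm : memSK refPyramid refCrossTerm := by
  have hdeg (i j k : Fin 3) : (X i * (X j + X k) : MvPolynomial (Fin 3) ℝ).totalDegree ≤ 2 := by
    have hmul := totalDegree_mul (X i) (X j + X k : MvPolynomial (Fin 3) ℝ)
    have hadd := totalDegree_add (X j) (X k : MvPolynomial (Fin 3) ℝ)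
    simp only [totalDegree_X, max_self] at hmul hadd
    omega
  have hplane {F : Set (Fin 3 → ℝ)} {b : Fin 3 → ℝ} {c : ℝ} (h : ∀ y ∈ F, b ⬝ᵥ y = c)
      {x : Fin 3 → ℝ} (hx : x ∈ convexHull ℝ F) : b 0 * x 0 + b 1 * x 1 + b 2 * x 2 = c := by
    simpa [dotProduct, Fin.sum_univ_three] using dotProduct_eq_of_mem_convexHull h hx
  refine ⟨(by unfold refCrossTerm; fun_prop : Continuous refCrossTerm).continuousOn,
    ⟨X 1 * (X 0 + X 2), hdeg 1 0 2, fun x hx => by simp [refCrossTerm_of_mem_pyrT1 hx]⟩,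
    ⟨X 0 * (X 1 + X 2), hdeg 0 1 2, fun x hx => by simp [refCrossTerm_of_mem_pyrT2 hx]⟩,
    fun F hF => ?_, 0, 0, 0, 1, fun s t _ _ => by simp [refPyramid, refCrossTerm]⟩
  have hT₁ {x : Fin 3 → ℝ} (hx : x ∈ convexHull ℝ F) (hF : F ⊆ {refPyramid 2, refPyramid 0,
      refPyramid 1, refPyramid 4}) : refCrossTerm x = x 1 * (x 0 + x 2) :=
    refCrossTerm_of_mem_pyrT1 (convexHull_mono hF hx)
  have hT₂ {x : Fin 3 → ℝ} (hx : x ∈ convexHull ℝ F) (hF : F ⊆ {refPyramid 0, refPyramid 2,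
      refPyramid 3, refPyramid 4}) : refCrossTerm x = x 0 * (x 1 + x 2) :=
    refCrossTerm_of_mem_pyrT2 (convexHull_mono hF hx)
  simp only [Set.mem_insert_iff, Set.mem_singleton_iff] at hF
  rcases hF with rfl | rfl | rfl | rfl
  · refine ⟨0, 0, fun x hx => ?_⟩
    have h : x 1 = 0 := by simpa using hplane (b := ![0, 1, 0]) (c := 0) (by simp [refPyramid]) hx
    simp [hT₁ hx (by simp), h]
  · refine ⟨0, ![0, 1, 0], fun x hx => ?_⟩
    have h : x 0 + x 2 = 1 := by simpa using hplane (b := ![1, 0, 1]) (c := 1) (by simp [refPyramid]) hx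
    simp [hT₁ hx (by simp [Set.insert_subset_iff]), h, dotProduct, Fin.sum_univ_three]
  · refine ⟨0, ![1, 0, 0], fun x hx => ?_⟩
    have h : x 1 + x 2 = 1 := by simpa using hplane (b := ![0, 1, 1]) (c := 1) (by simp [refPyramid]) hx
    simp [hT₂ hx (by simp), h, dotProduct, Fin.sum_univ_three]
  · refine ⟨0, 0, fun x hx => ?_⟩
    have h : x 0 = 0 := by simpa using hplane (b := ![1, 0, 0]) (c := 0) (by simp [refPyramid]) hx
    simp [hT₂ hx (by simp [Set.insert_subset_iff]), h]

theorem memSK_refBasis (i : Fin 5) : memSK refPyramid (refBasis i) := by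
  have haff (a : ℝ) (b : Fin 3 → ℝ) : memSK refPyramid (fun x => a + b ⬝ᵥ x) :=
    memSK_of_eq_add_dotProduct a b fun _ => rfl
  have hc := memSK_refCrossTerm
  fin_cases i
  · convert memSK_add (haff 1 ![-1, -1, -1]) hc using 1
    funext x
    simp [refBasis, dotProduct, Fin.sum_univ_three]
    ring
  · convert memSK_add (haff 0 ![1, 0, 0]) (memSK_smul (-1) hc) using 1
    funext x
    simp [refBasis, dotProduct, Fin.sum_univ_three]
    ring
  · exact hc
  · convert memSK_add (haff 0 ![0, 1, 0]) (memSK_smul (-1) hc) using 1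
    funext x
    simp [refBasis, dotProduct, Fin.sum_univ_three]
    ring
  · convert haff 0 ![0, 0, 1] using 1
    funext x
    simp [refBasis, dotProduct, Fin.sum_univ_three]

theorem exists_affineEquiv_comp_refPyramid {v : Fin 5 → Fin 3 → ℝ}
    (hpar : v 0 - v 1 + v 2 - v 3 = 0) (hnd1 : AffineIndependent ℝ ![v 2, v 0, v 1, v 4]) :
    ∃ E : (Fin 3 → ℝ) ≃ᵃ[ℝ] (Fin 3 → ℝ), ⇑E ∘ refPyramid = v := by
  have hli : LinearIndependent ℝ ![v 1 - v 0, v 3 - v 0, v 4 - v 0] := by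
    rw [Fintype.linearIndependent_iff]
    intro g hg
    simp only [Fin.sum_univ_three, Matrix.cons_val] at hg
    -- `v 3 - v 0 = v 2 - v 1` turns the relation into an affine one among `v 2, v 0, v 1, v 4`.
    have hw := hnd1.eq_zero_of_sum_eq_zero (s := Finset.univ)
      (w := ![g 1, -g 0 - g 2, g 0 - g 1, g 2]) (by simp [Fin.sum_univ_four]; ring) (by
        simp only [Fin.sum_univ_four, Matrix.cons_val]
        linear_combination (norm := module) hg + g 1 • hpar)
    have h₀ := hw 0 (by simp)
    have h₂ := hw 2 (by simp)
    have h₃ := hw 3 (by simp)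
    simp only [Matrix.cons_val] at h₀ h₂ h₃
    intro i
    fin_cases i <;> simp <;> linarith
  obtain ⟨E, hE⟩ := exists_affineEquiv_eq_add_sum (by simp) (v 0) hli
  refine ⟨E, funext fun j => ?_⟩
  fin_cases j <;> simp [hE, refPyramid, Fin.sum_univ_three]
  linear_combination (norm := module) -hpar

theorem stmt7 (v : Fin 5 → Fin 3 → ℝ)
    (hpar : v 0 - v 1 + v 2 - v 3 = 0)
    (hnd1 : AffineIndependent ℝ ![v 2, v 0, v 1, v 4])
    (hnd2 : AffineIndependent ℝ ![v 0, v 2, v 3, v 4]) :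
    -- dim S(K) = 5 and the vertex evaluations are the dual basis:
    (∃ φ : Fin 5 → (Fin 3 → ℝ) → ℝ,
      (∀ i, memSK v (φ i)) ∧
      (∀ i j, φ i (v j) = if i = j then 1 else 0) ∧
      (∀ f, memSK v f → ∃! c : Fin 5 → ℝ,
        ∀ x ∈ pyrK v, f x = ∑ i, c i * φ i x)) ∧
    -- unisolvence: a member of S(K) vanishing at all five vertices vanishes on K
    (∀ f, memSK v f → (∀ j, f (v j) = 0) → ∀ x ∈ pyrK v, f x = 0) := by
  obtain ⟨E, hE⟩ := exists_affineEquiv_comp_refPyramid hpar hnd1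
  have huni : ∀ f, memSK v f → (∀ j, f (v j) = 0) → ∀ x ∈ pyrK v, f x = 0 :=
    fun f hf h0 => memSK_eq_zero_of_eq_zero_at_vertices hpar hnd1 hnd2 hf h0
  have hmem (i : Fin 5) : memSK v (refBasis i ∘ E.symm) :=
    hE ▸ memSK_comp_affineEquiv_symm E (memSK_refBasis i)
  have hδ (i j : Fin 5) : (refBasis i ∘ E.symm) (v j) = if i = j then 1 else 0 := by
    simp [← hE, refBasis_apply_refPyramid]
  have hvert (j : Fin 5) : v j ∈ pyrK v := by
    have h₁ : v j ∈ ({v 2, v 0, v 1, v 4} : Set _) ∨ v j ∈ ({v 0, v 2, v 3, v 4} : Set _) := by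
      fin_cases j <;> simp
    exact h₁.imp (subset_convexHull ℝ _ ·) (subset_convexHull ℝ _ ·)
  exact ⟨⟨_, hmem, hδ, fun f hf =>
    existsUnique_eq_sum_mul (S := pyramidSpace v) hvert hmem hδ huni hf⟩, huni⟩
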